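/- Let m : ℝ³ → ℝ³ be differentiable at a point with |m| > 0, and set w := ((|m| − 1)/|m|) m. Then for each i, ∂ᵢʰ w · ∂ᵢʰ m = ((|m| − 1)/|m|) |∂ᵢʰ m|² + |m|⁻³ (m · ∂ᵢʰ m)², where ∂ᵢʰ u := ∂ᵢ u − eᵢ × u. In particular, if |m| > 1 then ∂ᵢʰ w · ∂ᵢʰ m ≥ 0. -/

import Mathlib

open Matrix

noncomputable section

abbrev E3 := EuclideanSpace ℝ (Fin 3)

/-- The dot product on `ℝ³`. -/
def dot3 (a b : E3) : ℝ := inner ℝ a b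

/-- The cross product on `ℝ³`. -/
def cross3 (a b : E3) : E3 :=
  (WithLp.equiv 2 (Fin 3 → ℝ)).symm
    ![a 1 * b 2 - a 2 * b 1, a 2 * b 0 - a 0 * b 2, a 0 * b 1 - a 1 * b 0]

/-- The `i`-th standard basis vector of `ℝ³`. -/
def e3 (i : Fin 3) : E3 := EuclideanSpace.single i 1

/-- The `i`-th partial derivative of `u` at `x`. -/
def pderiv3 (u : E3 → E3) (i : Fin 3) (x : E3) : E3 := fderiv ℝ u x (e3 i)

/-- The `i`-th partial helical derivative `∂ᵢʰ u = ∂ᵢ u - eᵢ × u`. -/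
def hderiv (u : E3 → E3) (i : Fin 3) (x : E3) : E3 :=
  pderiv3 u i x - cross3 (e3 i) (u x)

/-! With `c = (|m| - 1)/|m|`, linearity of the cross product gives the product rule
`∂ᵢʰ(c m) = (∂ᵢ c) m + c ∂ᵢʰ m`, and `∂ᵢ c = |m|⁻³ (m · ∂ᵢ m) = |m|⁻³ (m · ∂ᵢʰ m)` because
`m ⊥ eᵢ × m`. Dotting with `∂ᵢʰ m` yields the identity, whose two terms are nonnegative
once `|m| ≥ 1`. -/

section NormCalculus

variable {E F : Type*} [NormedAddCommGroup E] [NormedSpace ℝ E]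
  [NormedAddCommGroup F] [InnerProductSpace ℝ F] {f : E → F} {f' : E →L[ℝ] F} {x : E}

theorem HasFDerivAt.norm_of_ne_zero (hf : HasFDerivAt f f' x) (h0 : f x ≠ 0) :
    HasFDerivAt (fun y => ‖f y‖) (‖f x‖⁻¹ • (innerSL ℝ (f x)).comp f') x := by
  have hsq : 0 < ‖f x‖ ^ 2 := by positivity
  have h := (Real.hasDerivAt_sqrt hsq.ne').comp_hasFDerivAt x hf.norm_sq
  simp only [Function.comp_def, Real.sqrt_sq (norm_nonneg _)] at h
  refine h.congr_fderiv ?_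
  ext v
  simp only [one_div, _root_.mul_inv_rev, _root_.smul_apply, ContinuousLinearMap.comp_apply,
    coe_innerSL_apply, nsmul_eq_mul, Nat.cast_ofNat, smul_eq_mul]
  field_simp

theorem HasFDerivAt.norm_sub_one_div_norm (hf : HasFDerivAt f f' x) (h0 : f x ≠ 0) :
    HasFDerivAt (fun y => (‖f y‖ - 1) / ‖f y‖)
      ((‖f x‖ ^ 3)⁻¹ • (innerSL ℝ (f x)).comp f') x := by
  have hn : ‖f x‖ ≠ 0 := norm_ne_zero_iff.mpr h0
  have hφ : HasDerivAt (fun t : ℝ => (t - 1) / t) (‖f x‖ ^ 2)⁻¹ ‖f x‖ :=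
    (((hasDerivAt_id' _).sub_const 1).div (hasDerivAt_id' (‖f x‖)) hn).congr_deriv
      (by field_simp; ring)
  refine (hφ.comp_hasFDerivAt x (hf.norm_of_ne_zero h0)).congr_fderiv ?_
  rw [smul_smul]
  congr 1
  field_simp

end NormCalculus

theorem cross3_smul_right (a b : E3) (c : ℝ) : cross3 a (c • b) = c • cross3 a b := by
  ext j
  fin_cases j <;> simp [cross3] <;> ring

theorem inner_cross3_self_right (a b : E3) : inner ℝ b (cross3 a b) = 0 := by
  simp [cross3, PiLp.inner_apply, Fin.sum_univ_three]
  ring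

section HelicalDerivative

variable {m : E3 → E3} {x : E3}

theorem dot3_self_hderiv (i : Fin 3) :
    dot3 (m x) (hderiv m i x) = dot3 (m x) (pderiv3 m i x) := by
  rw [hderiv, dot3, dot3, inner_sub_right, inner_cross3_self_right, sub_zero]

theorem hderiv_smul {c : E3 → ℝ} (hc : DifferentiableAt ℝ c x) (hm : DifferentiableAt ℝ m x)
    (i : Fin 3) :
    hderiv (fun y => c y • m y) i x = fderiv ℝ c x (e3 i) • m x + c x • hderiv m i x := by
  rw [hderiv, hderiv, pderiv3, pderiv3, fderiv_fun_smul hc hm, cross3_smul_right, smul_sub]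
  simp only [_root_.add_apply, _root_.smul_apply, ContinuousLinearMap.smulRight_apply]
  abel

theorem hderiv_norm_sub_one_div_norm_smul (hm : DifferentiableAt ℝ m x) (h0 : m x ≠ 0)
    (i : Fin 3) :
    hderiv (fun y => ((‖m y‖ - 1) / ‖m y‖) • m y) i x
      = ((‖m x‖ ^ 3)⁻¹ * dot3 (m x) (hderiv m i x)) • m x
        + ((‖m x‖ - 1) / ‖m x‖) • hderiv m i x := by
  have hc := hm.hasFDerivAt.norm_sub_one_div_norm h0
  rw [hderiv_smul hc.differentiableAt hm, hc.fderiv, dot3_self_hderiv]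
  rfl

theorem dot3_hderiv_norm_sub_one_div_norm_smul (hm : DifferentiableAt ℝ m x) (h0 : m x ≠ 0)
    (i : Fin 3) :
    dot3 (hderiv (fun y => ((‖m y‖ - 1) / ‖m y‖) • m y) i x) (hderiv m i x)
      = ((‖m x‖ - 1) / ‖m x‖) * ‖hderiv m i x‖ ^ 2
        + (‖m x‖ ^ 3)⁻¹ * dot3 (m x) (hderiv m i x) ^ 2 := by
  rw [hderiv_norm_sub_one_div_norm_smul hm h0, dot3, inner_add_left, real_inner_smul_left,
    real_inner_smul_left, real_inner_self_eq_norm_sq, ← dot3]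
  ring

end HelicalDerivative

theorem stmt18 (m : E3 → E3) (x : E3) (hm : DifferentiableAt ℝ m x)
    (hpos : 0 < ‖m x‖) (i : Fin 3) :
    dot3 (hderiv (fun y => ((‖m y‖ - 1) / ‖m y‖) • m y) i x) (hderiv m i x)
        = ((‖m x‖ - 1) / ‖m x‖) * ‖hderiv m i x‖ ^ 2
          + ‖m x‖ ^ (-(3 : ℤ)) * dot3 (m x) (hderiv m i x) ^ 2 ∧
    (1 < ‖m x‖ →
      0 ≤ dot3 (hderiv (fun y => ((‖m y‖ - 1) / ‖m y‖) • m y) i x) (hderiv m i x)) := by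
  have hid := dot3_hderiv_norm_sub_one_div_norm_smul hm (norm_pos_iff.mp hpos) i
  refine ⟨by rw [hid, _root_.zpow_neg, zpow_ofNat], fun h1 => ?_⟩
  rw [hid]
  have hcoef : 0 ≤ (‖m x‖ - 1) / ‖m x‖ := div_nonneg (by linarith) hpos.le
  positivity
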